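/- For 0 < e < 1, J_O(3,2) + (1−e²)^{−1/3} J_O(3,1) = 3(e²−1)/e⁴ + ((3−2e²)/e⁵)√(1−e²) arcsin(e), where J_O(k,r) = 2(1−e²)^{−(2(r+1)−3k)/6} ∫₀¹ (1−x²)^r x^{3(k−1)−2r}(1−e²x²)^{−k/2} dx. -/

import Mathlib

/-! Both prefactors equal `(1 - e²)^(1/2)`, and the two integrands add up to
`(x² - x⁴)(1 - e²x²)^(-3/2)`, which has the elementary antiderivative `joAntideriv e`
(a combination of `x / √(1 - e²x²)`, `x √(1 - e²x²)` and `arcsin (e x)`). -/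

open Real Set

noncomputable def joAntideriv (e x : ℝ) : ℝ :=
  (e ^ 2 - 1) / e ^ 4 * x / √(1 - e ^ 2 * x ^ 2)
    - 1 / (2 * e ^ 4) * x * √(1 - e ^ 2 * x ^ 2)
    + (3 - 2 * e ^ 2) / (2 * e ^ 5) * arcsin (e * x)

lemma rpow_neg_three_halves_eq {u : ℝ} (hu : 0 < u) : u ^ (-(3 : ℝ) / 2) = (u * √u)⁻¹ := by
  rw [show -(3 : ℝ) / 2 = -(1 + 1 / 2) by norm_num, rpow_neg hu.le, rpow_add hu, rpow_one,
    ← sqrt_eq_rpow]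

lemma one_sub_sq_mul_sq_pos {e x : ℝ} (he : e ^ 2 < 1) (hx : x ∈ uIcc (0 : ℝ) 1) :
    0 < 1 - e ^ 2 * x ^ 2 := by
  rw [uIcc_of_le zero_le_one] at hx
  have hx2 : x ^ 2 ≤ 1 := by nlinarith [hx.1, hx.2]
  nlinarith [mul_le_mul_of_nonneg_left hx2 (sq_nonneg e)]

lemma hasDerivAt_joAntideriv {e x : ℝ} (he : e ≠ 0) (hx : 0 < 1 - e ^ 2 * x ^ 2) :
    HasDerivAt (joAntideriv e) ((x ^ 2 - x ^ 4) * (1 - e ^ 2 * x ^ 2) ^ (-(3 : ℝ) / 2)) x := by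
  set s := √(1 - e ^ 2 * x ^ 2) with hs_def
  have hs : 0 < s := sqrt_pos.mpr hx
  have hs2 : s ^ 2 = 1 - e ^ 2 * x ^ 2 := sq_sqrt hx.le
  have hradicand : HasDerivAt (fun y : ℝ => 1 - e ^ 2 * y ^ 2) (-(2 * e ^ 2 * x)) x := by
    exact (((hasDerivAt_pow 2 x).const_mul (e ^ 2)).const_sub 1).congr_deriv (by push_cast; ring)
  have hsqrt : HasDerivAt (fun y : ℝ => √(1 - e ^ 2 * y ^ 2)) (-(2 * e ^ 2 * x) / (2 * s)) x :=
    hradicand.sqrt hx.ne'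
  have hex : (e * x) ^ 2 < 1 := by nlinarith
  have harcsin : HasDerivAt (fun y : ℝ => arcsin (e * y)) (1 / s * e) x := by
    have h := (hasDerivAt_arcsin (by nlinarith) (by nlinarith)).comp x
      ((hasDerivAt_id' x).const_mul e)
    rwa [mul_one, mul_pow, ← hs_def] at h
  have hsum := ((((hasDerivAt_id x).const_mul ((e ^ 2 - 1) / e ^ 4)).div hsqrt hs.ne').sub
    (((hasDerivAt_id x).const_mul (1 / (2 * e ^ 4))).mul hsqrt)).add
    (harcsin.const_mul ((3 - 2 * e ^ 2) / (2 * e ^ 5)))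
  refine HasDerivAt.congr_deriv (f := joAntideriv e) hsum ?_
  rw [rpow_neg_three_halves_eq hx, ← hs_def, ← hs2]
  simp only [id]
  field_simp
  linear_combination (2 * e ^ 2 * x ^ 2 - s ^ 2) * hs2

lemma intervalIntegrable_mul_rpow_neg_three_halves {e : ℝ} (he : e ^ 2 < 1) {g : ℝ → ℝ}
    (hg : Continuous g) :
    IntervalIntegrable (fun x => g x * (1 - e ^ 2 * x ^ 2) ^ (-(3 : ℝ) / 2)) MeasureTheory.volume
      0 1 :=
  (hg.continuousOn.mul (ContinuousOn.rpow_const (by fun_prop)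
    fun x hx => Or.inl (one_sub_sq_mul_sq_pos he hx).ne')).intervalIntegrable

lemma integral_sq_sub_pow_four_mul_rpow {e : ℝ} (he0 : e ≠ 0) (he : e ^ 2 < 1) :
    2 * √(1 - e ^ 2) * ∫ x in (0 : ℝ)..1, (x ^ 2 - x ^ 4) * (1 - e ^ 2 * x ^ 2) ^ (-(3 : ℝ) / 2)
      = 3 * (e ^ 2 - 1) / e ^ 4 + (3 - 2 * e ^ 2) / e ^ 5 * √(1 - e ^ 2) * arcsin e := by
  have hFTC := intervalIntegral.integral_eq_sub_of_hasDerivAt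
    (fun x hx => hasDerivAt_joAntideriv he0 (one_sub_sq_mul_sq_pos he hx))
    (intervalIntegrable_mul_rpow_neg_three_halves he (g := fun x => x ^ 2 - x ^ 4) (by fun_prop))
  have hs : 0 < √(1 - e ^ 2) := sqrt_pos.mpr (by linarith)
  have hs2 : √(1 - e ^ 2) ^ 2 = 1 - e ^ 2 := sq_sqrt (by linarith)
  rw [hFTC, joAntideriv, joAntideriv]
  simp only [mul_zero, sub_zero, mul_one, one_pow, zero_div, zero_mul, arcsin_zero, add_zero]
  field_simp
  linear_combination (-e) * hs2

theorem JO_combination (e : ℝ) (he : e ∈ Set.Ioo (0 : ℝ) 1) :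
    (2 * (1 - e ^ 2) ^ ((1 : ℝ) / 2) *
        ∫ x in (0 : ℝ)..1, (1 - x ^ 2) ^ 2 * x ^ 2 * (1 - e ^ 2 * x ^ 2) ^ (-(3 : ℝ) / 2))
      + (1 - e ^ 2) ^ (-(1 : ℝ) / 3) *
        (2 * (1 - e ^ 2) ^ ((5 : ℝ) / 6) *
          ∫ x in (0 : ℝ)..1, (1 - x ^ 2) * x ^ 4 * (1 - e ^ 2 * x ^ 2) ^ (-(3 : ℝ) / 2))
      = 3 * (e ^ 2 - 1) / e ^ 4
        + (3 - 2 * e ^ 2) / e ^ 5 * Real.sqrt (1 - e ^ 2) * Real.arcsin e := by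
  obtain ⟨he0, he1⟩ := he
  have he2 : e ^ 2 < 1 := by nlinarith
  have hpos : 0 < 1 - e ^ 2 := by linarith
  have hprefactor : (1 - e ^ 2) ^ (-(1 : ℝ) / 3) * (1 - e ^ 2) ^ ((5 : ℝ) / 6) = √(1 - e ^ 2) := by
    rw [← rpow_add hpos, sqrt_eq_rpow]; norm_num
  have hsum : ((∫ x in (0 : ℝ)..1, (1 - x ^ 2) ^ 2 * x ^ 2 * (1 - e ^ 2 * x ^ 2) ^ (-(3 : ℝ) / 2))
      + ∫ x in (0 : ℝ)..1, (1 - x ^ 2) * x ^ 4 * (1 - e ^ 2 * x ^ 2) ^ (-(3 : ℝ) / 2))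
      = ∫ x in (0 : ℝ)..1, (x ^ 2 - x ^ 4) * (1 - e ^ 2 * x ^ 2) ^ (-(3 : ℝ) / 2) := by
    rw [← intervalIntegral.integral_add
      (intervalIntegrable_mul_rpow_neg_three_halves he2 (by fun_prop))
      (intervalIntegrable_mul_rpow_neg_three_halves he2 (by fun_prop))]
    exact intervalIntegral.integral_congr fun x _ => by ring
  rw [← integral_sq_sub_pow_four_mul_rpow he0.ne' he2, ← hsum, ← sqrt_eq_rpow, ← hprefactor]
  ring
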